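/- The platform formulas minimize train capacity usage: let a, b ∈ ℕ and set v53 = max(0, ⌈(b − a)/2⌉) and v40 = ⌈(a + b)/2⌉ − v53. Let L40, L53 be real numbers with 0 ≤ L40 ≤ L53. Then for every pair of natural numbers (w40, w53) satisfying the loading constraints a + b ≤ 2(w40 + w53) and b ≤ a + 2·w53, one has L40·v40 + L53·v53 ≤ L40·w40 + L53·w53. That is, (v40, v53) minimizes the total platform length L40·w40 + L53·w53 over all feasible platform counts. -/
import Mathlib


/-- The platform formulas minimize train capacity usage. For `a` 40-foot
containers and `b` 53-foot containers, with `v53 = max(0, ⌈(b − a)/2⌉)` and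
`v40 = ⌈(a + b)/2⌉ − v53` (written in ℕ, where truncated subtraction realizes
the `max(0, ·)` and `⌈n/2⌉ = (n+1)/2`), and platform lengths
`0 ≤ L40 ≤ L53`: for every pair of natural numbers `(w40, w53)` satisfying the
loading constraints `a + b ≤ 2(w40 + w53)` and `b ≤ a + 2·w53`, the total
platform length satisfies `L40·v40 + L53·v53 ≤ L40·w40 + L53·w53`. -/
theorem platform_formulas_minimal (a b : ℕ) (L40 L53 : ℝ)
    (hL0 : 0 ≤ L40) (hL : L40 ≤ L53) :
    let v53 := (b - a + 1) / 2
    let v40 := (a + b + 1) / 2 - v53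
    ∀ w40 w53 : ℕ, a + b ≤ 2 * (w40 + w53) → b ≤ a + 2 * w53 →
      L40 * (v40 : ℝ) + L53 * (v53 : ℝ) ≤ L40 * (w40 : ℝ) + L53 * (w53 : ℝ) := by
  intro v53 v40 w40 w53 h1 h2
  have hv53le : v53 ≤ (a + b + 1) / 2 := by
    apply Nat.div_le_div_right
    omega
  have hsum : v40 + v53 = (a + b + 1) / 2 := by omega
  have h53 : v53 ≤ w53 := by
    have : b - a ≤ 2 * w53 := by omega
    show (b - a + 1) / 2 ≤ w53
    omega
  have hS : v40 + v53 ≤ w40 + w53 := by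
    rw [hsum]; omega
  have h53' : (v53 : ℝ) ≤ (w53 : ℝ) := by exact_mod_cast h53
  have hS' : (v40 : ℝ) + (v53 : ℝ) ≤ (w40 : ℝ) + (w53 : ℝ) := by exact_mod_cast hS
  nlinarith [mul_nonneg hL0 (sub_nonneg.mpr hS'), mul_nonneg (sub_nonneg.mpr hL) (sub_nonneg.mpr h53')]
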